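/- Monotonicity of fidelity under trace-preserving completely positive maps given in Kraus form: if T(ω) = Σ_j K_j ω K_j† with Σ_j K_j† K_j = I, then for density matrices ρ, σ, the fidelity satisfies f(T(ρ), T(σ)) ≥ f(ρ, σ), where f(ρ,σ) = Tr√(ρ^{1/2} σ ρ^{1/2}). -/

import Mathlib

/-!
The proof is the trace-norm duality `Tr |X| = max Re Tr (X C)` over contractions `C`.
The polar decomposition of `√σ √ρ` gives a contraction `V` with
`f(ρ, σ) = Re Tr (√ρ V √σ) = Re Tr T(√ρ V √σ)`, the second step because `T` preserves traces.
Stacking the Kraus operators into the block row `M_a = [K_j a]_j` one has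
`T(a V bᴴ) = M_a (V ⊕ ⋯ ⊕ V) M_bᴴ` and `M_a M_aᴴ = T(a aᴴ)`, so `M_√ρ = √T(ρ) W₁ᴴ` and
`M_√σ = √T(σ) W₂ᴴ` with contractions `W₁, W₂`. Hence `f(ρ, σ) = Re Tr (√T(σ) √T(ρ) C)` for a
contraction `C`, which by duality is at most `Tr |√T(σ) √T(ρ)| = f(T(ρ), T(σ))`.
-/

open Matrix Kronecker
open scoped ComplexOrder

open scoped Classical in
/-- Positive semidefinite square root (zero if the matrix is not PSD). -/
noncomputable def psqrt {n : Type*} [Fintype n] [DecidableEq n] (A : Matrix n n ℂ) : Matrix n n ℂ :=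
  if h : A.PosSemidef then
    (h.1.eigenvectorUnitary : Matrix n n ℂ) * diagonal ((↑) ∘ (√·) ∘ h.1.eigenvalues) *
      (star h.1.eigenvectorUnitary : Matrix n n ℂ) else 0

/-- Matrix absolute value `|A| = √(Aᴴ A)`. -/
noncomputable def matAbs {n : Type*} [Fintype n] [DecidableEq n] (A : Matrix n n ℂ) : Matrix n n ℂ :=
  psqrt (Aᴴ * A)

open scoped MatrixOrder

section Sqrt
variable {n : Type*} [Fintype n] [DecidableEq n]

lemma psqrt_eq_sqrt {A : Matrix n n ℂ} (hA : A.PosSemidef) : psqrt A = CFC.sqrt A := by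
  rw [psqrt, dif_pos hA, CFC.sqrt_eq_real_sqrt A hA.nonneg, cfcₙ_eq_cfc, hA.1.cfc_eq,
    IsHermitian.cfc, Unitary.conjStarAlgAut_apply]
  rfl

lemma conjTranspose_sqrt (A : Matrix n n ℂ) : (CFC.sqrt A)ᴴ = CFC.sqrt A :=
  (CFC.sqrt_nonneg A).isSelfAdjoint.star_eq

lemma posSemidef_sqrt_mul_mul_sqrt (A : Matrix n n ℂ) {B : Matrix n n ℂ} (hB : B.PosSemidef) :
    (CFC.sqrt A * B * CFC.sqrt A).PosSemidef := by
  simpa only [conjTranspose_sqrt] using hB.mul_mul_conjTranspose_same (CFC.sqrt A)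

end Sqrt

lemma re_trace_le_re_trace {n : Type*} [Fintype n] {A B : Matrix n n ℂ} (h : A ≤ B) :
    A.trace.re ≤ B.trace.re := by
  have := (Matrix.le_iff.mp h).trace_nonneg
  rw [trace_sub, sub_nonneg] at this
  exact (Complex.le_def.mp this).1

lemma conjTranspose_mul_mul_le {l m : Type*} [Fintype l] [Fintype m] {A B : Matrix l l ℂ}
    (h : A ≤ B) (C : Matrix l m ℂ) : Cᴴ * A * C ≤ Cᴴ * B * C := by
  rw [Matrix.le_iff, ← Matrix.sub_mul, ← Matrix.mul_sub]
  exact (Matrix.le_iff.mp h).conjTranspose_mul_mul_same C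

lemma blockDiagonal_le_blockDiagonal {l o : Type*} [Fintype l] [DecidableEq l] [Fintype o]
    [DecidableEq o] {M N : o → Matrix l l ℂ} (h : ∀ i, M i ≤ N i) :
    blockDiagonal M ≤ blockDiagonal N := by
  set R := fun i => CFC.sqrt (N i - M i)
  have hR : N - M = fun i => (R i)ᴴ * R i := funext fun i => by
    rw [conjTranspose_sqrt, CFC.sqrt_mul_sqrt_self _ (sub_nonneg.mpr (h i))]
    rfl
  rw [Matrix.le_iff, ← blockDiagonal_sub, hR, blockDiagonal_mul, ← blockDiagonal_conjTranspose]
  exact posSemidef_conjTranspose_mul_self _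

lemma conjTranspose_mul_self_mul_le_one {k l m : Type*} [Fintype k] [Fintype l] [DecidableEq l]
    [Fintype m] [DecidableEq m] {X : Matrix k l ℂ} {Y : Matrix l m ℂ}
    (hX : Xᴴ * X ≤ 1) (hY : Yᴴ * Y ≤ 1) : (X * Y)ᴴ * (X * Y) ≤ 1 :=
  calc (X * Y)ᴴ * (X * Y) = Yᴴ * (Xᴴ * X) * Y := by
        simp only [conjTranspose_mul, Matrix.mul_assoc]
    _ ≤ Yᴴ * 1 * Y := conjTranspose_mul_mul_le hX Y
    _ ≤ 1 := by rwa [Matrix.mul_one]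

section Contraction
variable {k l m : Type*} [Fintype k] [DecidableEq k] [Fintype l] [DecidableEq l] [Fintype m]
  [DecidableEq m]

/-- Both conditions say that the operator norm of `W` is at most `1`; asking for both spares
proving that they are equivalent. -/
def IsContraction (W : Matrix k l ℂ) : Prop := Wᴴ * W ≤ 1 ∧ W * Wᴴ ≤ 1

namespace IsContraction

lemma conjTranspose {W : Matrix k l ℂ} (hW : IsContraction W) : IsContraction Wᴴ := by
  simpa only [IsContraction, conjTranspose_conjTranspose] using hW.symm

lemma mul {X : Matrix k l ℂ} {Y : Matrix l m ℂ} (hX : IsContraction X) (hY : IsContraction Y) :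
    IsContraction (X * Y) := by
  refine ⟨conjTranspose_mul_self_mul_le_one hX.1 hY.1, ?_⟩
  simpa only [conjTranspose_mul, conjTranspose_conjTranspose] using
    conjTranspose_mul_self_mul_le_one hY.conjTranspose.1 hX.conjTranspose.1

lemma blockDiagonal {o : Type*} [Fintype o] [DecidableEq o] {W : Matrix k l ℂ}
    (hW : IsContraction W) : IsContraction (blockDiagonal fun _ : o => W) := by
  simp only [IsContraction, blockDiagonal_conjTranspose, ← blockDiagonal_mul, ← blockDiagonal_one]
  exact ⟨blockDiagonal_le_blockDiagonal fun _ => hW.1, blockDiagonal_le_blockDiagonal fun _ => hW.2⟩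

end IsContraction

lemma isContraction_of_isStarProjection {W : Matrix k l ℂ} (hW : IsStarProjection (Wᴴ * W)) :
    IsContraction W := by
  set P := Wᴴ * W
  have hP' : (1 - P)ᴴ = 1 - P := hW.one_sub.isSelfAdjoint.star_eq
  have hWP : W * P = W := by
    have h0 : (W * (1 - P))ᴴ * (W * (1 - P)) = 0 := by
      rw [conjTranspose_mul, hP', Matrix.mul_assoc, ← Matrix.mul_assoc Wᴴ, hW.mul_one_sub_self,
        Matrix.mul_zero]
    rw [conjTranspose_mul_self_eq_zero, Matrix.mul_sub, Matrix.mul_one, sub_eq_zero] at h0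
    exact h0.symm
  have hQ : IsStarProjection (W * Wᴴ) := by
    refine ⟨?_, ?_⟩
    · rw [IsIdempotentElem, Matrix.mul_assoc, ← Matrix.mul_assoc Wᴴ, ← Matrix.mul_assoc, hWP]
    · rw [isSelfAdjoint_iff, star_eq_conjTranspose, conjTranspose_mul, conjTranspose_conjTranspose]
  exact ⟨hW.le_one, hQ.le_one⟩

end Contraction

section PseudoInverse
variable {n : Type*} [Fintype n] [DecidableEq n]

/-- The Moore–Penrose pseudo-inverse of a self-adjoint matrix: the nonzero eigenvalues are
inverted and the kernel is kept, because `(0 : ℝ)⁻¹ = 0`. -/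
noncomputable def pinv (G : Matrix n n ℂ) : Matrix n n ℂ := cfc (·⁻¹ : ℝ → ℝ) G

lemma conjTranspose_pinv (G : Matrix n n ℂ) : (pinv G)ᴴ = pinv G :=
  (cfc_predicate (·⁻¹ : ℝ → ℝ) G).star_eq

lemma commute_pinv {G : Matrix n n ℂ} (hG : IsSelfAdjoint G) : Commute G (pinv G) := by
  have := cfc_commute_cfc (fun x : ℝ => x) (·⁻¹) G
  rwa [cfc_id' ℝ G] at this

lemma mul_pinv_mul_self {G : Matrix n n ℂ} (hG : IsSelfAdjoint G) : G * pinv G * G = G := by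
  have hcont (f : ℝ → ℝ) : ContinuousOn f (spectrum ℝ G) := finite_real_spectrum.continuousOn f
  calc G * pinv G * G = cfc (fun x : ℝ => x * x⁻¹ * x) G := by
        rw [pinv, cfc_mul _ _ G (hcont _) (hcont _), cfc_mul _ _ G (hcont _) (hcont _),
          cfc_id' ℝ G]
    _ = G := by simp only [mul_inv_mul_cancel]; exact cfc_id' ℝ G

lemma isStarProjection_mul_pinv {G : Matrix n n ℂ} (hG : IsSelfAdjoint G) :
    IsStarProjection (G * pinv G) where
  isIdempotentElem := by
    rw [IsIdempotentElem, ← Matrix.mul_assoc, mul_pinv_mul_self hG]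
  isSelfAdjoint := by
    rw [isSelfAdjoint_iff, star_mul, hG.star_eq, star_eq_conjTranspose, conjTranspose_pinv]
    exact (commute_pinv hG).symm.eq

end PseudoInverse

section Polar
variable {k l : Type*} [Fintype k] [DecidableEq k] [Fintype l] [DecidableEq l]

theorem exists_polar_decomposition (A : Matrix k l ℂ) :
    ∃ W : Matrix k l ℂ, IsContraction W ∧ A = W * CFC.sqrt (Aᴴ * A) ∧
      CFC.sqrt (Aᴴ * A) = Wᴴ * A := by
  set G := CFC.sqrt (Aᴴ * A)
  have hG : IsSelfAdjoint G := (CFC.sqrt_nonneg _).isSelfAdjoint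
  have hGG : G * G = Aᴴ * A :=
    CFC.sqrt_mul_sqrt_self _ (posSemidef_conjTranspose_mul_self A).nonneg
  set P := G * pinv G
  have hP : IsStarProjection P := isStarProjection_mul_pinv hG
  have hPG : pinv G * G = P := (commute_pinv hG).symm.eq
  have hGP : G * P = G := by rw [← hPG, ← Matrix.mul_assoc, mul_pinv_mul_self hG]
  have hAP : A * P = A := by
    have h0 : (A * (1 - P))ᴴ * (A * (1 - P)) = 0 := by
      have hG1P : G * (1 - P) = 0 := by rw [Matrix.mul_sub, Matrix.mul_one, hGP, sub_self]
      rw [conjTranspose_mul, Matrix.mul_assoc, ← Matrix.mul_assoc Aᴴ, ← hGG, Matrix.mul_assoc G,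
        hG1P, Matrix.mul_zero, Matrix.mul_zero]
    rw [conjTranspose_mul_self_eq_zero, Matrix.mul_sub, Matrix.mul_one, sub_eq_zero] at h0
    exact h0.symm
  refine ⟨A * pinv G, isContraction_of_isStarProjection ?_, ?_, ?_⟩
  · rw [conjTranspose_mul, conjTranspose_pinv, Matrix.mul_assoc, ← Matrix.mul_assoc Aᴴ, ← hGG,
      ← Matrix.mul_assoc, ← Matrix.mul_assoc, hPG, Matrix.mul_assoc]
    rwa [show G * pinv G = P from rfl, hP.isIdempotentElem.eq]
  · rw [Matrix.mul_assoc, hPG, hAP]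
  · rw [conjTranspose_mul, conjTranspose_pinv, Matrix.mul_assoc, ← hGG, ← Matrix.mul_assoc, hPG]
    exact (mul_pinv_mul_self hG).symm

theorem exists_eq_sqrt_mul_conjTranspose (M : Matrix k l ℂ) :
    ∃ W : Matrix l k ℂ, IsContraction W ∧ M = CFC.sqrt (M * Mᴴ) * Wᴴ := by
  obtain ⟨W, hW, hM, -⟩ := exists_polar_decomposition Mᴴ
  refine ⟨W, hW, ?_⟩
  conv_lhs => rw [← conjTranspose_conjTranspose M, hM]
  rw [conjTranspose_mul, conjTranspose_sqrt, conjTranspose_conjTranspose]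

end Polar

lemma re_trace_conjTranspose_mul_mul_le {l : Type*} [Fintype l] [DecidableEq l]
    {G Z : Matrix l l ℂ} (hG : 0 ≤ G) (hZ : Z * Zᴴ ≤ 1) : (Zᴴ * G * Z).trace.re ≤ G.trace.re := by
  set g := CFC.sqrt G
  have hg : gᴴ = g := conjTranspose_sqrt G
  have hgg : g * g = G := CFC.sqrt_mul_sqrt_self G hG
  have htr : (Zᴴ * G * Z).trace = (gᴴ * (Z * Zᴴ) * g).trace := by
    rw [hg, Matrix.mul_assoc, trace_mul_comm, ← hgg, Matrix.mul_assoc, Matrix.mul_assoc,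
      trace_mul_comm g]
  calc (Zᴴ * G * Z).trace.re = (gᴴ * (Z * Zᴴ) * g).trace.re := by rw [htr]
    _ ≤ (gᴴ * 1 * g).trace.re := re_trace_le_re_trace (conjTranspose_mul_mul_le hZ g)
    _ = G.trace.re := by rw [Matrix.mul_one, hg, hgg]

lemma re_trace_mul_le_of_mul_conjTranspose_le_one {l : Type*} [Fintype l] [DecidableEq l]
    {G Z : Matrix l l ℂ} (hG : 0 ≤ G) (hZ : Z * Zᴴ ≤ 1) : (G * Z).trace.re ≤ G.trace.re := by
  have hGh : Gᴴ = G := hG.isSelfAdjoint.star_eq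
  -- expand `0 ≤ Tr ((1 - Z)ᴴ G (1 - Z))`
  have hpos := (Complex.le_def.mp (hG.posSemidef.conjTranspose_mul_mul_same (1 - Z)).trace_nonneg).1
  have hconj : (Zᴴ * G).trace.re = (G * Z).trace.re := by
    rw [← hGh, ← conjTranspose_mul, trace_conjTranspose, hGh]
    rfl
  have hexp : ((1 - Z)ᴴ * G * (1 - Z)).trace.re =
      G.trace.re - (G * Z).trace.re - (Zᴴ * G).trace.re + (Zᴴ * G * Z).trace.re := by
    simp only [conjTranspose_sub, conjTranspose_one, Matrix.sub_mul, Matrix.mul_sub,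
      Matrix.one_mul, Matrix.mul_one, trace_sub, Complex.sub_re]
    ring
  have hquad := re_trace_conjTranspose_mul_mul_le hG hZ
  rw [Complex.zero_re] at hpos
  linarith

theorem re_trace_mul_le_trace_sqrt {k l : Type*} [Fintype k] [DecidableEq k] [Fintype l]
    [DecidableEq l] (B : Matrix k l ℂ) {C : Matrix l k ℂ} (hC : IsContraction C) :
    (B * C).trace.re ≤ (CFC.sqrt (Bᴴ * B)).trace.re := by
  obtain ⟨W, hW, hB, -⟩ := exists_polar_decomposition B
  calc (B * C).trace.re = (CFC.sqrt (Bᴴ * B) * (C * W)).trace.re := by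
        conv_lhs => rw [hB]
        rw [Matrix.mul_assoc, trace_mul_comm, Matrix.mul_assoc]
    _ ≤ _ := re_trace_mul_le_of_mul_conjTranspose_le_one (CFC.sqrt_nonneg _) (hC.mul hW).2

section Kraus
variable {ι m n p q : Type*} [Fintype ι]

def rowBlock {α : Type*} (F : ι → Matrix m n α) : Matrix m (n × ι) α :=
  of fun i x => F x.2 i x.1

lemma rowBlock_mul_conjTranspose [Fintype n] {α : Type*} [NonUnitalNonAssocSemiring α] [Star α]
    (F G : ι → Matrix m n α) : rowBlock F * (rowBlock G)ᴴ = ∑ j, F j * (G j)ᴴ := by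
  ext i i'
  simp only [rowBlock, mul_apply, conjTranspose_apply, Matrix.sum_apply, of_apply,
    Fintype.sum_prod_type]
  exact Finset.sum_comm

lemma rowBlock_mul_blockDiagonal [Fintype n] [DecidableEq ι] {α : Type*}
    [NonUnitalNonAssocSemiring α] (F : ι → Matrix m n α) (E : Matrix n p α) :
    rowBlock F * blockDiagonal (fun _ : ι => E) = rowBlock fun j => F j * E := by
  ext i x
  simp only [rowBlock, mul_apply, of_apply, blockDiagonal_apply, Fintype.sum_prod_type]
  rw [Finset.sum_comm, Finset.sum_eq_single x.2 (fun j _ hj => by simp [hj]) (by simp)]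
  simp

variable [Fintype n]

def krausMap (K : ι → Matrix m n ℂ) (X : Matrix n n ℂ) : Matrix m m ℂ :=
  ∑ j, K j * X * (K j)ᴴ

lemma posSemidef_krausMap [Fintype m] (K : ι → Matrix m n ℂ) {X : Matrix n n ℂ}
    (hX : X.PosSemidef) : (krausMap K X).PosSemidef :=
  posSemidef_sum _ fun j _ => hX.mul_mul_conjTranspose_same (K j)

lemma trace_krausMap [Fintype m] [DecidableEq n] {K : ι → Matrix m n ℂ}
    (hK : ∑ j, (K j)ᴴ * K j = 1) (X : Matrix n n ℂ) : (krausMap K X).trace = X.trace := by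
  calc (krausMap K X).trace = ∑ j, ((K j)ᴴ * K j * X).trace := by
        simp only [krausMap, trace_sum]
        exact Finset.sum_congr rfl fun j _ => by rw [trace_mul_comm, Matrix.mul_assoc]
    _ = X.trace := by rw [← trace_sum, ← Finset.sum_mul, hK, Matrix.one_mul]

lemma rowBlock_mul_conjTranspose_rowBlock [Fintype p] (K : ι → Matrix m n ℂ)
    (c d : Matrix n p ℂ) :
    (rowBlock fun j => K j * c) * (rowBlock fun j => K j * d)ᴴ = krausMap K (c * dᴴ) := by
  simp only [rowBlock_mul_conjTranspose, krausMap, conjTranspose_mul, Matrix.mul_assoc]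

theorem re_trace_krausMap_le [DecidableEq ι] [Fintype m] [DecidableEq m] [Fintype p]
    [DecidableEq p] [Fintype q] [DecidableEq q] (K : ι → Matrix m n ℂ) (a : Matrix n p ℂ)
    (b : Matrix n q ℂ) {V : Matrix p q ℂ} (hV : IsContraction V) :
    (krausMap K (a * V * bᴴ)).trace.re ≤
      (CFC.sqrt (CFC.sqrt (krausMap K (a * aᴴ)) * krausMap K (b * bᴴ) *
        CFC.sqrt (krausMap K (a * aᴴ)))).trace.re := by
  obtain ⟨W₁, hW₁, ha⟩ := exists_eq_sqrt_mul_conjTranspose (rowBlock fun j => K j * a)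
  obtain ⟨W₂, hW₂, hb⟩ := exists_eq_sqrt_mul_conjTranspose (rowBlock fun j => K j * b)
  rw [rowBlock_mul_conjTranspose_rowBlock] at ha hb
  set P := krausMap K (a * aᴴ)
  set Q := krausMap K (b * bᴴ)
  have hQ : 0 ≤ Q := (posSemidef_krausMap K (posSemidef_self_mul_conjTranspose b)).nonneg
  set D : Matrix (p × ι) (q × ι) ℂ := blockDiagonal fun _ => V
  have hcross : krausMap K (a * V * bᴴ) =
      (rowBlock fun j => K j * a) * D * (rowBlock fun j => K j * b)ᴴ := by
    rw [rowBlock_mul_blockDiagonal, ← rowBlock_mul_conjTranspose_rowBlock]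
    simp only [Matrix.mul_assoc]
  calc (krausMap K (a * V * bᴴ)).trace.re
      = (CFC.sqrt Q * CFC.sqrt P * (W₁ᴴ * D * W₂)).trace.re := by
        rw [hcross, ha, hb, conjTranspose_mul, conjTranspose_conjTranspose, conjTranspose_sqrt,
          ← Matrix.mul_assoc, trace_mul_comm]
        simp only [Matrix.mul_assoc]
    _ ≤ (CFC.sqrt ((CFC.sqrt Q * CFC.sqrt P)ᴴ * (CFC.sqrt Q * CFC.sqrt P))).trace.re :=
        re_trace_mul_le_trace_sqrt _ ((hW₁.conjTranspose.mul hV.blockDiagonal).mul hW₂)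
    _ = (CFC.sqrt (CFC.sqrt P * Q * CFC.sqrt P)).trace.re := by
        rw [conjTranspose_mul, conjTranspose_sqrt, conjTranspose_sqrt, Matrix.mul_assoc,
          ← Matrix.mul_assoc (CFC.sqrt Q), CFC.sqrt_mul_sqrt_self Q hQ, ← Matrix.mul_assoc]

end Kraus

theorem fidelity_monotone_cptp_general {m n : Type*} [Fintype m] [DecidableEq m]
    [Fintype n] [DecidableEq n] {J : ℕ} (K : Fin J → Matrix m n ℂ)
    (hK : ∑ j, (K j)ᴴ * K j = 1)
    (ρ σ : Matrix n n ℂ) (hρ : ρ.PosSemidef) (hσ : σ.PosSemidef) :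
    ((psqrt (psqrt ρ * σ * psqrt ρ)).trace).re ≤
      ((psqrt (psqrt (∑ j, K j * ρ * (K j)ᴴ) * (∑ j, K j * σ * (K j)ᴴ) *
        psqrt (∑ j, K j * ρ * (K j)ᴴ))).trace).re := by
  change _ ≤ (psqrt (psqrt (krausMap K ρ) * krausMap K σ * psqrt (krausMap K ρ))).trace.re
  rw [psqrt_eq_sqrt hρ, psqrt_eq_sqrt (posSemidef_sqrt_mul_mul_sqrt ρ hσ),
    psqrt_eq_sqrt (posSemidef_krausMap K hρ),
    psqrt_eq_sqrt (posSemidef_sqrt_mul_mul_sqrt _ (posSemidef_krausMap K hσ))]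
  set r := CFC.sqrt ρ
  set s := CFC.sqrt σ
  have hr : rᴴ = r := conjTranspose_sqrt ρ
  have hs : sᴴ = s := conjTranspose_sqrt σ
  have hrr : r * r = ρ := CFC.sqrt_mul_sqrt_self ρ hρ.nonneg
  have hss : s * s = σ := CFC.sqrt_mul_sqrt_self σ hσ.nonneg
  obtain ⟨W, hW, -, hsr⟩ := exists_polar_decomposition (s * r)
  have key := re_trace_krausMap_le K r s hW.conjTranspose
  rw [hr, hs, hrr, hss, trace_krausMap hK] at key
  calc (CFC.sqrt (r * σ * r)).trace.re = (Wᴴ * (s * r)).trace.re := by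
        rw [← hsr, conjTranspose_mul, hr, hs, ← hss]
        simp only [Matrix.mul_assoc]
    _ = (r * Wᴴ * s).trace.re := by rw [← Matrix.mul_assoc, trace_mul_comm, ← Matrix.mul_assoc]
    _ ≤ _ := key

theorem fidelity_monotone_cptp {m n : Type*} [Fintype m] [DecidableEq m]
    [Fintype n] [DecidableEq n] {J : ℕ} (K : Fin J → Matrix m n ℂ)
    (hK : ∑ j, (K j)ᴴ * K j = 1)
    (ρ σ : Matrix n n ℂ) (hρ : ρ.PosSemidef) (hσ : σ.PosSemidef)
    (hρ1 : ρ.trace = 1) (hσ1 : σ.trace = 1) :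
    ((psqrt (psqrt ρ * σ * psqrt ρ)).trace).re ≤
      ((psqrt (psqrt (∑ j, K j * ρ * (K j)ᴴ) * (∑ j, K j * σ * (K j)ᴴ) *
        psqrt (∑ j, K j * ρ * (K j)ᴴ))).trace).re :=
  fidelity_monotone_cptp_general K hK ρ σ hρ hσ
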